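/- For every r > 0, the function f(t) = c₀e^{−4t} + c₊e^{−u₊t} + c₋e^{−u₋t} + p², where p = (4+r)/(16+5r), u = √(4+2r+r²), u₊ = 6+r+u, u₋ = 6+r−u, c₀ = (3+r)/(2(16+5r)), c± = (3+r)(u(16+3r) ∓ (32+14r+3r²))/(4u(16+5r)²), is strictly decreasing on [0,∞), satisfies f(0) = p, and tends to p² as t → ∞. -/
import Mathlib


open Real Filter Set

/-- u = √(4+2r+r²). -/
noncomputable def uu (r : ℝ) : ℝ := Real.sqrt (4 + 2*r + r^2)

/-- Stationary frequency of C: p = (4+r)/(16+5r). -/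
noncomputable def pC (r : ℝ) : ℝ := (4 + r) / (16 + 5*r)

/-- c₀ = (3+r)/(2(16+5r)). -/
noncomputable def c0 (r : ℝ) : ℝ := (3 + r) / (2 * (16 + 5*r))

/-- c₊ = (3+r)(u(16+3r) − (32+14r+3r²))/(4u(16+5r)²). -/
noncomputable def cp (r : ℝ) : ℝ :=
  (3 + r) * (uu r * (16 + 3*r) - (32 + 14*r + 3*r^2)) / (4 * uu r * (16 + 5*r)^2)

/-- c₋ = (3+r)(u(16+3r) + (32+14r+3r²))/(4u(16+5r)²). -/
noncomputable def cm (r : ℝ) : ℝ :=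
  (3 + r) * (uu r * (16 + 3*r) + (32 + 14*r + 3*r^2)) / (4 * uu r * (16 + 5*r)^2)

/-- (C,C)(t) in the stationary JC+CpG model:
f(t) = c₀e^{−4t} + c₊e^{−u₊t} + c₋e^{−u₋t} + p². -/
noncomputable def fCC (r t : ℝ) : ℝ :=
  c0 r * Real.exp (-4 * t) + cp r * Real.exp (-(6 + r + uu r) * t)
    + cm r * Real.exp (-(6 + r - uu r) * t) + (pC r)^2

/-- f is strictly decreasing on [0,∞), f(0) = p, and f(t) → p² as t → ∞. -/
theorem stmt8 (r : ℝ) (hr : 0 < r) :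
    StrictAntiOn (fCC r) (Ici 0) ∧ fCC r 0 = pC r ∧
    Tendsto (fCC r) atTop (nhds ((pC r)^2)) := by
  have hden : (0:ℝ) < 16 + 5*r := by linarith
  have hq : (0:ℝ) < 4 + 2*r + r^2 := by positivity
  have hu : 0 < uu r := Real.sqrt_pos.mpr hq
  have hu2 : (uu r)^2 = 4 + 2*r + r^2 := Real.sq_sqrt hq.le
  have hult : uu r < 6 + r := by
    rw [show uu r = Real.sqrt (4+2*r+r^2) from rfl, Real.sqrt_lt' (by linarith)]
    nlinarith
  have hupos : 0 < 6 + r + uu r := by linarith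
  have humpos : 0 < 6 + r - uu r := by linarith
  have hc0 : 0 < c0 r := by unfold c0; positivity
  have hnum : 32 + 14*r + 3*r^2 < uu r * (16 + 3*r) := by
    by_contra hcon
    push_neg at hcon
    nlinarith [mul_nonneg (sub_nonneg.mpr hcon)
      (by nlinarith : (0:ℝ) ≤ 32 + 14*r + 3*r^2 + uu r * (16 + 3*r)), hu2]
  have hcp : 0 < cp r := by
    unfold cp; apply div_pos; · nlinarith
    · positivity
  have hcm : 0 < cm r := by
    unfold cm; apply div_pos; · nlinarith
    · positivity
  have hsum : c0 r + cp r + cm r = pC r - (pC r)^2 := by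
    unfold c0 cp cm pC
    field_simp
    ring
  refine ⟨?_, ?_, ?_⟩
  · intro a _ b _ hab
    unfold fCC
    have e1 : Real.exp (-4*b) < Real.exp (-4*a) := Real.exp_lt_exp.mpr (by nlinarith)
    have e2 : Real.exp (-(6+r+uu r)*b) < Real.exp (-(6+r+uu r)*a) :=
      Real.exp_lt_exp.mpr (by nlinarith)
    have e3 : Real.exp (-(6+r-uu r)*b) < Real.exp (-(6+r-uu r)*a) :=
      Real.exp_lt_exp.mpr (by nlinarith)
    nlinarith [mul_lt_mul_of_pos_left e1 hc0, mul_lt_mul_of_pos_left e2 hcp,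
      mul_lt_mul_of_pos_left e3 hcm]
  · unfold fCC
    simp only [mul_zero, Real.exp_zero, mul_one]
    linarith [hsum]
  · have key : ∀ c : ℝ, 0 < c → Tendsto (fun t => Real.exp (-c*t)) atTop (nhds 0) := by
      intro c hc
      have h1 : Tendsto (fun x : ℝ => c * x) atTop atTop := tendsto_id.const_mul_atTop hc
      have h2 := Real.tendsto_exp_neg_atTop_nhds_zero.comp h1
      simpa only [Function.comp_def, neg_mul] using h2
    have h := ((((key 4 (by norm_num)).const_mul (c0 r)).add
        ((key (6 + r + uu r) hupos).const_mul (cp r))).add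
        ((key (6 + r - uu r) humpos).const_mul (cm r))).add
        (tendsto_const_nhds (x := (pC r)^2))
    unfold fCC
    simpa only [mul_zero, zero_add] using h
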